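/- arXiv:2307.11008 — 2 statements merged into one kernel-verified Lean document; each statement's English description precedes it below -/
import Mathlib

section
/- Let ρ be a bipartite state on ℂ^d ⊗ ℂ^d, σ a PPT state, and λ ≥ 0 such that ρ_iso := pΦ_d + (1−p)τ_d ≤ λσ, where p ∈ [0,1]. Then dp ≤ λ. In particular, the generalised robustness of the isotropic state with respect to PPT states equals (dp−1)₊ for p > 1/d. -/
open Matrix BigOperators
open scoped Kronecker ComplexOrder

noncomputable section

abbrev BOp (d : ℕ) := Matrix (Fin d × Fin d) (Fin d × Fin d) ℂ

/-- Loewner order: `A ≤ B` iff `B - A` is positive semidefinite. -/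
def loe {n : Type*} [Fintype n] (A B : Matrix n n ℂ) : Prop := (B - A).PosSemidef

/-- A density operator: positive semidefinite with unit trace. -/
def IsState {n : Type*} [Fintype n] [DecidableEq n] (ρ : Matrix n n ℂ) : Prop :=
  ρ.PosSemidef ∧ ρ.trace = 1

/-- Separable bipartite state (convex combination of product states). -/
def IsSep {a b : Type*} [Fintype a] [DecidableEq a] [Fintype b] [DecidableEq b]
    (ρ : Matrix (a × b) (a × b) ℂ) : Prop :=
  ∃ (m : ℕ) (p : Fin m → ℝ) (A : Fin m → Matrix a a ℂ) (B : Fin m → Matrix b b ℂ),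
    (∀ i, 0 ≤ p i) ∧ (∑ i, p i) = 1 ∧
    (∀ i, IsState (A i)) ∧ (∀ i, IsState (B i)) ∧
    ρ = ∑ i, ((p i : ℝ) : ℂ) • (A i ⊗ₖ B i)

/-- The cone generated by separable states. -/
def InSepCone {a b : Type*} [Fintype a] [DecidableEq a] [Fintype b] [DecidableEq b]
    (S : Matrix (a × b) (a × b) ℂ) : Prop :=
  ∃ (c : ℝ) (σ : Matrix (a × b) (a × b) ℂ), 0 ≤ c ∧ IsSep σ ∧ S = ((c : ℝ) : ℂ) • σ

/-- Maximally entangled state `Φ_d` on `ℂ^d ⊗ ℂ^d`. -/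
def PhiME (d : ℕ) : BOp d := fun p q => if p.1 = p.2 ∧ q.1 = q.2 then ((1 : ℂ) / d) else 0

/-- `τ_d = (𝟙 - Φ_d)/(d² - 1)`. -/
def tauME (d : ℕ) : BOp d := (((d : ℂ)^2 - 1))⁻¹ • (1 - PhiME d)

/-- Partial transpose on the second tensor factor. -/
def pt {a b : Type*} (A : Matrix (a × b) (a × b) ℂ) : Matrix (a × b) (a × b) ℂ :=
  fun p q => A (p.1, q.2) (q.1, p.2)

/-- Total positive-semidefinite square root (junk value `0` off the PSD cone). -/
noncomputable def msqrt {n : Type*} [Fintype n] [DecidableEq n] (A : Matrix n n ℂ) :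
    Matrix n n ℂ :=
  open scoped Classical in
  if h : A.PosSemidef then
    (h.1.eigenvectorUnitary : Matrix n n ℂ) * diagonal ((↑) ∘ (√·) ∘ h.1.eigenvalues) *
      (star h.1.eigenvectorUnitary : Matrix n n ℂ) else 0

/-- Trace norm `‖A‖₁ = Tr √(AᴴA)`. -/
noncomputable def traceNorm {n : Type*} [Fintype n] [DecidableEq n] (A : Matrix n n ℂ) : ℝ :=
  (msqrt (Aᴴ * A)).trace.re


/-- A PPT state: a state whose partial transpose is positive semidefinite. -/
def IsPPTState {a b : Type*} [Fintype a] [DecidableEq a] [Fintype b] [DecidableEq b]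
    (σ : Matrix (a × b) (a × b) ℂ) : Prop :=
  σ.PosSemidef ∧ σ.trace = 1 ∧ (pt σ).PosSemidef

/-- Generalised robustness w.r.t. PPT states. -/
noncomputable def RgPPT {a b : Type*} [Fintype a] [DecidableEq a] [Fintype b] [DecidableEq b]
    (ρ : Matrix (a × b) (a × b) ℂ) : ℝ :=
  sInf {r : ℝ | 0 ≤ r ∧ ∃ σ, IsPPTState σ ∧ loe ρ (((1 + r : ℝ) : ℂ) • σ)}


/-!
Pair everything with `Φ_d`. The isotropic state has `Tr[ρ_iso Φ_d] = p`, while for a PPT state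
`Tr[σ Φ_d] = Tr[σ^Γ Φ_d^Γ] = Tr[σ^Γ F] / d ≤ 1 / d`, because `(𝟙 - F) / 2` is a projection.
Hence `ρ_iso ≤ λ σ` forces `p ≤ λ / d`. The bound is attained by the isotropic state at `p = 1/d`:
its partial transpose is `(𝟙 + F) / (d (d + 1)) ≥ 0`, and `d p ρ_{1/d} - ρ_p = (d p - 1) τ_d ≥ 0`.
-/

open scoped MatrixOrder

namespace Matrix.PosSemidef

variable {n : Type*} [Fintype n]

omit [Fintype n] in
theorem ofReal_smul {A : Matrix n n ℂ} (hA : A.PosSemidef) {c : ℝ} (hc : 0 ≤ c) :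
    ((c : ℂ) • A).PosSemidef :=
  hA.smul (Complex.zero_le_real.mpr hc)

theorem trace_mul_nonneg [DecidableEq n] {A B : Matrix n n ℂ} (hA : A.PosSemidef)
    (hB : B.PosSemidef) : 0 ≤ (A * B).trace := by
  have hsqrt : (CFC.sqrt A).PosSemidef := (CFC.sqrt_nonneg A).posSemidef
  have hAB : (A * B).trace = (CFC.sqrt A * B * CFC.sqrt A).trace := calc
    (A * B).trace = (CFC.sqrt A * (CFC.sqrt A * B)).trace := by
      rw [← Matrix.mul_assoc, CFC.sqrt_mul_sqrt_self A hA.nonneg]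
    _ = _ := trace_mul_comm _ _
  rw [hAB]
  simpa only [hsqrt.isHermitian.eq] using (hB.mul_mul_conjTranspose_same (CFC.sqrt A)).trace_nonneg

end Matrix.PosSemidef

theorem loe.trace_mul_le {n : Type*} [Fintype n] [DecidableEq n] {A B C : Matrix n n ℂ}
    (hAB : loe A B) (hC : C.PosSemidef) : (A * C).trace ≤ (B * C).trace := by
  simpa only [Matrix.sub_mul, trace_sub, sub_nonneg] using hAB.trace_mul_nonneg hC

section PartialTranspose

variable {a b : Type*}

theorem pt_add (A B : Matrix (a × b) (a × b) ℂ) : pt (A + B) = pt A + pt B := rfl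

theorem pt_sub (A B : Matrix (a × b) (a × b) ℂ) : pt (A - B) = pt A - pt B := rfl

theorem pt_smul (c : ℂ) (A : Matrix (a × b) (a × b) ℂ) : pt (c • A) = c • pt A := rfl

theorem pt_pt (A : Matrix (a × b) (a × b) ℂ) : pt (pt A) = A := rfl

theorem pt_one [DecidableEq a] [DecidableEq b] : pt (1 : Matrix (a × b) (a × b) ℂ) = 1 := by
  ext p q
  simp only [pt, one_apply, Prod.ext_iff]
  by_cases h1 : p.1 = q.1 <;> by_cases h2 : p.2 = q.2 <;> simp [h1, h2, eq_comm]

variable [Fintype a] [Fintype b]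

theorem trace_pt (A : Matrix (a × b) (a × b) ℂ) : (pt A).trace = A.trace := rfl

theorem trace_mul_pt (A B : Matrix (a × b) (a × b) ℂ) : (A * pt B).trace = (pt A * B).trace := by
  simp only [trace, diag, mul_apply, pt]
  rw [← Fintype.sum_prod_type', ← Fintype.sum_prod_type']
  exact Fintype.sum_equiv
    ⟨fun x => ((x.1.1, x.2.2), (x.2.1, x.1.2)), fun x => ((x.1.1, x.2.2), (x.2.1, x.1.2)),
      fun _ => rfl, fun _ => rfl⟩ _ _ fun _ => rfl

end PartialTranspose

section Swap

variable (n : Type*) [DecidableEq n]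

def swapMatrix : Matrix (n × n) (n × n) ℂ := fun p q => if p.1 = q.2 ∧ q.1 = p.2 then 1 else 0

theorem swapMatrix_conjTranspose : (swapMatrix n)ᴴ = swapMatrix n := by
  ext p q
  simp only [conjTranspose_apply, swapMatrix]
  by_cases h1 : p.1 = q.2 <;> by_cases h2 : q.1 = p.2 <;> simp [h1, h2, and_comm]

theorem swapMatrix_mul_self [Fintype n] : swapMatrix n * swapMatrix n = 1 := by
  ext p q
  simp only [mul_apply, swapMatrix, Fintype.sum_prod_type, one_apply, ite_mul, one_mul, zero_mul]
  rw [Finset.sum_comm]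
  simp [ite_and, Finset.sum_ite_eq', Prod.ext_iff, and_comm, eq_comm]

theorem isStarProjection_half_one_add_swapMatrix [Fintype n] :
    IsStarProjection ((2 : ℂ)⁻¹ • (1 + swapMatrix n)) := by
  refine ⟨?_, ?_⟩
  · simp only [IsIdempotentElem, smul_mul_smul, Matrix.add_mul, Matrix.mul_add, Matrix.one_mul,
      Matrix.mul_one, swapMatrix_mul_self]
    match_scalars <;> ring
  · simp [IsSelfAdjoint, star_eq_conjTranspose, swapMatrix_conjTranspose]

theorem isStarProjection_half_one_sub_swapMatrix [Fintype n] :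
    IsStarProjection ((2 : ℂ)⁻¹ • (1 - swapMatrix n)) := by
  refine ⟨?_, ?_⟩
  · simp only [IsIdempotentElem, smul_mul_smul, Matrix.sub_mul, Matrix.mul_sub, Matrix.one_mul,
      Matrix.mul_one, swapMatrix_mul_self]
    match_scalars <;> ring
  · simp [IsSelfAdjoint, star_eq_conjTranspose, swapMatrix_conjTranspose]

variable {n}

theorem posSemidef_one_add_swapMatrix [Fintype n] : (1 + swapMatrix n).PosSemidef := by
  have h := (isStarProjection_half_one_add_swapMatrix n).nonneg.posSemidef.smul
    (show (0 : ℂ) ≤ 2 by norm_num)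
  rwa [smul_smul, mul_inv_cancel₀ two_ne_zero, one_smul] at h

theorem posSemidef_one_sub_swapMatrix [Fintype n] : (1 - swapMatrix n).PosSemidef := by
  have h := (isStarProjection_half_one_sub_swapMatrix n).nonneg.posSemidef.smul
    (show (0 : ℂ) ≤ 2 by norm_num)
  rwa [smul_smul, mul_inv_cancel₀ two_ne_zero, one_smul] at h

theorem trace_mul_swapMatrix_le [Fintype n] {A : Matrix (n × n) (n × n) ℂ} (hA : A.PosSemidef) :
    (A * swapMatrix n).trace ≤ A.trace := by
  have h := hA.trace_mul_nonneg posSemidef_one_sub_swapMatrix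
  rwa [Matrix.mul_sub, Matrix.mul_one, trace_sub, sub_nonneg] at h

end Swap

section Isotropic

variable {d : ℕ}

def isotropicState (d : ℕ) (p : ℝ) : BOp d :=
  ((p : ℝ) : ℂ) • PhiME d + ((1 - p : ℝ) : ℂ) • tauME d

theorem PhiME_conjTranspose : (PhiME d)ᴴ = PhiME d := by
  ext p q
  simp only [conjTranspose_apply, PhiME]
  by_cases h1 : p.1 = p.2 <;> by_cases h2 : q.1 = q.2 <;> simp [h1, h2, and_comm]

theorem PhiME_mul_self (hd : 0 < d) : PhiME d * PhiME d = PhiME d := by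
  ext p q
  simp only [mul_apply, PhiME, Fintype.sum_prod_type]
  by_cases h1 : p.1 = p.2 <;> by_cases h2 : q.1 = q.2 <;>
    simp [h1, h2, Finset.card_univ]
  rw [← mul_assoc, mul_inv_cancel₀ (by exact_mod_cast hd.ne'), one_mul]

theorem trace_PhiME (hd : 0 < d) : (PhiME d).trace = 1 := by
  simp only [trace, diag, PhiME, Fintype.sum_prod_type]
  simp [Finset.card_univ, mul_inv_cancel₀ (by exact_mod_cast hd.ne' : (d : ℂ) ≠ 0)]

theorem isStarProjection_PhiME (hd : 0 < d) : IsStarProjection (PhiME d) :=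
  ⟨PhiME_mul_self hd, PhiME_conjTranspose⟩

theorem pt_PhiME : pt (PhiME d) = (d : ℂ)⁻¹ • swapMatrix (Fin d) := by
  ext p q
  simp only [pt, PhiME, swapMatrix, Matrix.smul_apply, smul_eq_mul]
  by_cases h1 : p.1 = q.2 <;> by_cases h2 : q.1 = p.2 <;> simp [h1, h2]

theorem tauME_eq_ofReal_smul : tauME d = ((((d : ℝ) ^ 2 - 1)⁻¹ : ℝ) : ℂ) • (1 - PhiME d) := by
  rw [tauME]
  push_cast
  rfl

theorem tauME_mul_PhiME (hd : 0 < d) : tauME d * PhiME d = 0 := by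
  rw [tauME, smul_mul, Matrix.sub_mul, Matrix.one_mul, PhiME_mul_self hd, sub_self, smul_zero]

theorem posSemidef_tauME (hd : 0 < d) : (tauME d).PosSemidef := by
  have hd1 : (1 : ℝ) ≤ d := by exact_mod_cast hd
  rw [tauME_eq_ofReal_smul]
  exact (isStarProjection_PhiME hd).one_sub.nonneg.posSemidef.ofReal_smul
    (inv_nonneg.mpr (by nlinarith))

theorem trace_tauME (hd : 1 < d) : (tauME d).trace = 1 := by
  have hne : (d : ℂ) ^ 2 - 1 ≠ 0 := by
    rw [sub_ne_zero]
    exact_mod_cast (one_lt_pow₀ (by exact_mod_cast hd) two_ne_zero : (1 : ℕ) < d ^ 2).ne'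
  rw [tauME, trace_smul, trace_sub, trace_one, trace_PhiME (by omega), smul_eq_mul]
  simp only [Fintype.card_prod, Fintype.card_fin, Nat.cast_mul]
  field_simp

theorem trace_isotropicState (hd : 1 < d) (p : ℝ) : (isotropicState d p).trace = 1 := by
  rw [isotropicState, trace_add, trace_smul, trace_smul, trace_PhiME (by omega), trace_tauME hd]
  simp

theorem trace_isotropicState_mul_PhiME (hd : 0 < d) (p : ℝ) :
    (isotropicState d p * PhiME d).trace = p := by
  rw [isotropicState, Matrix.add_mul, smul_mul, smul_mul, PhiME_mul_self hd, tauME_mul_PhiME hd,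
    smul_zero, add_zero, trace_smul, trace_PhiME hd, smul_eq_mul, mul_one]

end Isotropic

section Robustness

variable {d : ℕ}

theorem IsPPTState.trace_mul_PhiME_le {σ : BOp d} (hσ : IsPPTState σ) :
    (σ * PhiME d).trace ≤ (d : ℂ)⁻¹ := by
  have hd : (0 : ℂ) ≤ (d : ℂ)⁻¹ := by simp
  calc (σ * PhiME d).trace = (d : ℂ)⁻¹ * (pt σ * swapMatrix (Fin d)).trace := by
        rw [← pt_pt (PhiME d), trace_mul_pt, pt_PhiME, Matrix.mul_smul, trace_smul, smul_eq_mul]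
    _ ≤ (d : ℂ)⁻¹ * (pt σ).trace :=
        mul_le_mul_of_nonneg_left (trace_mul_swapMatrix_le hσ.2.2) hd
    _ = (d : ℂ)⁻¹ := by rw [trace_pt, hσ.2.1, mul_one]

theorem mul_le_of_loe_isotropicState (hd : 0 < d) {p lam : ℝ} {σ : BOp d} (hσ : IsPPTState σ)
    (hlam : 0 ≤ lam) (h : loe (isotropicState d p) ((lam : ℂ) • σ)) : d * p ≤ lam := by
  have hpC : (p : ℂ) ≤ ((lam / d : ℝ) : ℂ) := calc
    (p : ℂ) = (isotropicState d p * PhiME d).trace := (trace_isotropicState_mul_PhiME hd p).symm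
    _ ≤ ((lam : ℂ) • σ * PhiME d).trace :=
        h.trace_mul_le (isStarProjection_PhiME hd).nonneg.posSemidef
    _ = lam * (σ * PhiME d).trace := by rw [smul_mul, trace_smul, smul_eq_mul]
    _ ≤ lam * (d : ℂ)⁻¹ :=
        mul_le_mul_of_nonneg_left hσ.trace_mul_PhiME_le (Complex.zero_le_real.mpr hlam)
    _ = ((lam / d : ℝ) : ℂ) := by push_cast; rfl
  rw [mul_comm, ← le_div_iff₀ (by exact_mod_cast hd)]
  exact Complex.real_le_real.mp hpC

theorem pt_isotropicState_inv (hd : 1 < d) :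
    pt (isotropicState d (d : ℝ)⁻¹) =
      ((((d : ℝ) * (d + 1))⁻¹ : ℝ) : ℂ) • (1 + swapMatrix (Fin d)) := by
  have hd1 : (d : ℂ) - 1 ≠ 0 := by
    rw [sub_ne_zero]
    exact_mod_cast hd.ne'
  rw [isotropicState, tauME]
  simp only [pt_add, pt_smul, pt_sub, pt_one, pt_PhiME]
  rw [show (d : ℂ) ^ 2 - 1 = (d - 1) * (d + 1) by ring]
  match_scalars <;> field_simp
  ring

theorem isPPTState_isotropicState_inv (hd : 1 < d) :
    IsPPTState (isotropicState d (d : ℝ)⁻¹) := by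
  have hd1 : (1 : ℝ) < d := by exact_mod_cast hd
  refine ⟨?_, trace_isotropicState hd _, ?_⟩
  · exact ((isStarProjection_PhiME (by omega)).nonneg.posSemidef.ofReal_smul (by positivity)).add
      ((posSemidef_tauME (by omega)).ofReal_smul (sub_nonneg.mpr (inv_le_one_of_one_le₀ hd1.le)))
  · rw [pt_isotropicState_inv hd]
    exact posSemidef_one_add_swapMatrix.ofReal_smul (by positivity)

theorem loe_isotropicState (hd : 0 < d) {p : ℝ} (hdp : 1 ≤ d * p) :
    loe (isotropicState d p) ((((d : ℝ) * p : ℝ) : ℂ) • isotropicState d (d : ℝ)⁻¹) := by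
  have hdiff : (((d : ℝ) * p : ℝ) : ℂ) • isotropicState d (d : ℝ)⁻¹ - isotropicState d p =
      ((d * p - 1 : ℝ) : ℂ) • tauME d := by
    rw [isotropicState, isotropicState]
    match_scalars <;> field_simp <;> ring
  rw [loe, hdiff]
  exact (posSemidef_tauME hd).ofReal_smul (sub_nonneg.mpr hdp)

theorem RgPPT_isotropicState (hd : 1 < d) {p : ℝ} (hp : 1 / (d : ℝ) < p) :
    RgPPT (isotropicState d p) = d * p - 1 := by
  have hdp : 1 ≤ (d : ℝ) * p := by
    rw [div_lt_iff₀ (by positivity)] at hp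
    linarith
  refine IsLeast.csInf_eq ⟨⟨sub_nonneg.mpr hdp, _, isPPTState_isotropicState_inv hd, ?_⟩, ?_⟩
  · rw [add_sub_cancel]
    exact loe_isotropicState (by omega) hdp
  · rintro r ⟨hr, σ, hσ, hρσ⟩
    linarith [mul_le_of_loe_isotropicState (by omega) hσ (by linarith) hρσ]

end Robustness

theorem stmt1_general (d : ℕ) (hd : 1 < d) (p : ℝ)
    (σ : BOp d) (hσ : IsPPTState σ) (lam : ℝ) (hlam : 0 ≤ lam)
    (h : loe (((p : ℝ) : ℂ) • PhiME d + ((1 - p : ℝ) : ℂ) • tauME d) ((lam : ℂ) • σ)) :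
    (d : ℝ) * p ≤ lam ∧
    (1 / (d : ℝ) < p →
      RgPPT (((p : ℝ) : ℂ) • PhiME d + ((1 - p : ℝ) : ℂ) • tauME d) = (d : ℝ) * p - 1) :=
  ⟨mul_le_of_loe_isotropicState (by omega) hσ hlam h, RgPPT_isotropicState hd⟩

theorem stmt1 (d : ℕ) (hd : 1 < d) (p : ℝ) (hp0 : 0 ≤ p) (hp1 : p ≤ 1)
    (σ : BOp d) (hσ : IsPPTState σ) (lam : ℝ) (hlam : 0 ≤ lam)
    (h : loe (((p : ℝ) : ℂ) • PhiME d + ((1 - p : ℝ) : ℂ) • tauME d) ((lam : ℂ) • σ)) :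
    (d : ℝ) * p ≤ lam ∧
    (1 / (d : ℝ) < p →
      RgPPT (((p : ℝ) : ℂ) • PhiME d + ((1 - p : ℝ) : ℂ) • tauME d) = (d : ℝ) * p - 1) :=
  stmt1_general d hd p σ hσ lam hlam h

end
end

section
/- For any two sub-normalised positive semidefinite operators ρ, σ (i.e. ρ, σ ≥ 0 and Tr ρ, Tr σ ≤ 1), the generalised trace distance T(ρ,σ) := (1/2)‖ρ−σ‖₁ + (1/2)|Tr ρ − Tr σ| and the purified distance P(ρ,σ) := √(1−F(ρ,σ)), where F(ρ,σ) = (‖√ρ√σ‖₁ + √((1−Tr ρ)(1−Tr σ)))², satisfy T(ρ,σ) ≤ P(ρ,σ) ≤ √(T(ρ,σ)(2−T(ρ,σ))). -/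
/-!
Upper bound `T ≤ P`: measure `ρ` and `σ` with the projection `E` onto the nonnegative eigenspace
of `ρ - σ`, and record the missing weight `1 - Tr` as a third outcome. A measurement cannot
decrease the fidelity, so the resulting probability vectors `p`, `q` satisfy
`√F ≤ ∑ √(p i) √(q i)`, while their total variation distance is at least `T`. The classical
inequality `(∑ √(p i) √(q i))² + TV(p, q)² ≤ 1` then gives `F ≤ 1 - T²`.

Lower bound `P ≤ √(T (2 - T))`: the Powers–Størmer inequality `Tr (√ρ - √σ)² ≤ ‖ρ - σ‖₁` gives
`‖√ρ √σ‖₁ ≥ (Tr ρ + Tr σ - ‖ρ - σ‖₁) / 2`, and with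
`√((1 - Tr ρ) (1 - Tr σ)) ≥ min (1 - Tr ρ) (1 - Tr σ)` this yields `√F ≥ 1 - T`.

Both steps rest on the duality `Re Tr (M U) ≤ ‖M‖₁` for contractions `U`, with equality when `U`
is the adjoint of the partial isometry in the polar decomposition of `M`.
-/

open Matrix BigOperators
open scoped Kronecker ComplexOrder

noncomputable section

/-- Generalised (Uhlmann) fidelity for sub-normalised positive operators. -/
noncomputable def gFid {n : Type*} [Fintype n] [DecidableEq n] (ρ σ : Matrix n n ℂ) : ℝ :=
  (traceNorm (msqrt ρ * msqrt σ) + Real.sqrt ((1 - ρ.trace.re) * (1 - σ.trace.re))) ^ 2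

/-- Purified distance. -/
noncomputable def pDist {n : Type*} [Fintype n] [DecidableEq n] (ρ σ : Matrix n n ℂ) : ℝ :=
  Real.sqrt (1 - gFid ρ σ)

/-- Generalised trace distance. -/
noncomputable def gTDist {n : Type*} [Fintype n] [DecidableEq n] (ρ σ : Matrix n n ℂ) : ℝ :=
  traceNorm (ρ - σ) / 2 + |ρ.trace.re - σ.trace.re| / 2

open scoped MatrixOrder

namespace Matrix

section Rectangular
variable {m n : Type*} [Fintype m] [Fintype n]

theorem re_trace_conjTranspose_mul_le (X Y : Matrix m n ℂ) :
    (Xᴴ * Y).trace.re ≤ √(Xᴴ * X).trace.re * √(Yᴴ * Y).trace.re := by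
  have h (A B : Matrix m n ℂ) : (Aᴴ * B).trace =
      inner ℂ (WithLp.toLp 2 A.vec : EuclideanSpace ℂ (n × m)) (WithLp.toLp 2 B.vec) := by
    rw [EuclideanSpace.inner_toLp_toLp (𝕜 := ℂ), dotProduct_comm, star_vec_dotProduct_vec]
  simpa only [h, norm_eq_sqrt_re_inner (𝕜 := ℂ), RCLike.re_to_complex] using
    re_inner_le_norm (𝕜 := ℂ) (WithLp.toLp 2 X.vec : EuclideanSpace ℂ (n × m)) (WithLp.toLp 2 Y.vec)

end Rectangular

variable {n : Type*} [Fintype n] [DecidableEq n]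

theorem PosSemidef.re_trace_mul_nonneg {A B : Matrix n n ℂ} (hA : A.PosSemidef)
    (hB : B.PosSemidef) : 0 ≤ (A * B).trace.re := by
  obtain ⟨C, rfl⟩ := CStarAlgebra.nonneg_iff_eq_star_mul_self.mp hA.nonneg
  rw [star_eq_conjTranspose, Matrix.mul_assoc, trace_mul_comm]
  exact (Complex.nonneg_iff.mp (hB.mul_mul_conjTranspose_same C).trace_nonneg).1

theorem PosSemidef.re_trace_conjTranspose_mul_mul_le {Z U : Matrix n n ℂ} (hZ : Z.PosSemidef)
    (hU : (1 - U * Uᴴ).PosSemidef) : (Uᴴ * Z * U).trace.re ≤ Z.trace.re := by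
  have h := hZ.re_trace_mul_nonneg hU
  rw [Matrix.mul_sub, Matrix.mul_one, trace_sub, Complex.sub_re, ← Matrix.mul_assoc,
    trace_mul_comm, ← Matrix.mul_assoc] at h
  linarith

theorem cfc_mul_cfc (A : Matrix n n ℂ) (f g : ℝ → ℝ) :
    cfc f A * cfc g A = cfc (fun x => f x * g x) A :=
  (cfc_mul f g A (A.finite_real_spectrum.continuousOn f)
    (A.finite_real_spectrum.continuousOn g)).symm

theorem one_sub_cfc {A : Matrix n n ℂ} (hA : A.IsHermitian) (f : ℝ → ℝ) :
    1 - cfc f A = cfc (fun x => 1 - f x) A := by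
  rw [cfc_sub _ _ A (A.finite_real_spectrum.continuousOn _) (A.finite_real_spectrum.continuousOn f)]
  congr 1
  exact (cfc_const_one ℝ A hA).symm

theorem isHermitian_cfc (A : Matrix n n ℂ) (f : ℝ → ℝ) : (cfc f A).IsHermitian :=
  cfc_predicate f A

theorem IsHermitian.mul_cfc {A : Matrix n n ℂ} (hA : A.IsHermitian) (f : ℝ → ℝ) :
    A * cfc f A = cfc (fun x => x * f x) A := by
  conv_lhs => arg 1; rw [← cfc_id' ℝ A hA.isSelfAdjoint]
  exact cfc_mul_cfc A _ f

theorem posSemidef_cfc {A : Matrix n n ℂ} {f : ℝ → ℝ} (hf : ∀ x ∈ spectrum ℝ A, 0 ≤ f x) :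
    (cfc f A).PosSemidef :=
  nonneg_iff_posSemidef.mp (cfc_nonneg hf)

theorem IsHermitian.trace_cfc {A : Matrix n n ℂ} (hA : A.IsHermitian) (f : ℝ → ℝ) :
    (cfc f A).trace = ((∑ i, f (hA.eigenvalues i) : ℝ) : ℂ) := by
  rw [hA.cfc_eq, IsHermitian.cfc, Unitary.conjStarAlgAut_apply, trace_mul_cycle,
    Unitary.coe_star_mul_self, one_mul, trace_diagonal, Complex.ofReal_sum]
  rfl

end Matrix

section
variable {n : Type*} [Fintype n] [DecidableEq n]

theorem msqrt_eq_cfc {A : Matrix n n ℂ} (hA : A.PosSemidef) : msqrt A = cfc Real.sqrt A := by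
  rw [hA.1.cfc_eq, msqrt, dif_pos hA, IsHermitian.cfc, Unitary.conjStarAlgAut_apply]
  rfl

theorem posSemidef_msqrt (A : Matrix n n ℂ) : (msqrt A).PosSemidef := by
  by_cases hA : A.PosSemidef
  · rw [msqrt_eq_cfc hA]
    exact posSemidef_cfc fun x _ => Real.sqrt_nonneg x
  · rw [msqrt, dif_neg hA]
    exact .zero

theorem msqrt_mul_self {A : Matrix n n ℂ} (hA : A.PosSemidef) : msqrt A * msqrt A = A := by
  rw [msqrt_eq_cfc hA, cfc_mul_cfc]
  exact (cfc_congr fun x hx => Real.mul_self_sqrt (spectrum_nonneg_of_nonneg hA.nonneg hx)).trans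
    (cfc_id' ℝ A hA.1.isSelfAdjoint)

theorem traceNorm_nonneg (M : Matrix n n ℂ) : 0 ≤ traceNorm M :=
  (Complex.nonneg_iff.mp (posSemidef_msqrt _).trace_nonneg).1

/-- The partial isometry `W = M (Mᴴ M)^{-1/2}` of the polar decomposition `M = W |M|`; since
`(√0)⁻¹ = 0`, the inverse square root vanishes on the kernel of `Mᴴ M`. -/
def polarIsometry (M : Matrix n n ℂ) : Matrix n n ℂ :=
  M * cfc (fun x => (√x)⁻¹) (Mᴴ * M)

variable (M : Matrix n n ℂ)

theorem posSemidef_one_sub_conjTranspose_polarIsometry_mul_self :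
    (1 - (polarIsometry M)ᴴ * polarIsometry M).PosSemidef := by
  have hM := posSemidef_conjTranspose_mul_self M
  have hN := (isHermitian_cfc (Mᴴ * M) fun x => (√x)⁻¹).eq
  rw [polarIsometry, conjTranspose_mul, hN, Matrix.mul_assoc, ← Matrix.mul_assoc Mᴴ,
    hM.1.mul_cfc, cfc_mul_cfc, one_sub_cfc hM.1]
  refine posSemidef_cfc fun x hx => ?_
  rcases (spectrum_nonneg_of_nonneg hM.nonneg hx).eq_or_lt with rfl | hx0
  · simp
  · have : (√x)⁻¹ * (x * (√x)⁻¹) = 1 := by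
      field_simp
      rw [Real.sq_sqrt hx0.le]
    simp [this]

theorem polarIsometry_mul_msqrt : polarIsometry M * msqrt (Mᴴ * M) = M := by
  have hM := posSemidef_conjTranspose_mul_self M
  set P := cfc (fun x => (√x)⁻¹ * √x) (Mᴴ * M)
  have hker : (M * (1 - P))ᴴ * (M * (1 - P)) = 0 := by
    rw [one_sub_cfc hM.1, conjTranspose_mul, (isHermitian_cfc _ _).eq, Matrix.mul_assoc,
      ← Matrix.mul_assoc Mᴴ, hM.1.mul_cfc, cfc_mul_cfc]
    refine (cfc_congr fun x hx => ?_).trans (cfc_zero ℝ (Mᴴ * M))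
    rcases (spectrum_nonneg_of_nonneg hM.nonneg hx).eq_or_lt with rfl | hx0
    · simp
    · simp [inv_mul_cancel₀ (Real.sqrt_pos.mpr hx0).ne']
  rw [polarIsometry, msqrt_eq_cfc hM, Matrix.mul_assoc, cfc_mul_cfc]
  rw [conjTranspose_mul_self_eq_zero, Matrix.mul_sub, Matrix.mul_one, sub_eq_zero] at hker
  exact hker.symm

theorem re_trace_mul_conjTranspose_polarIsometry :
    (M * (polarIsometry M)ᴴ).trace.re = traceNorm M := by
  have hM := posSemidef_conjTranspose_mul_self M
  have hN := (isHermitian_cfc (Mᴴ * M) fun x => (√x)⁻¹).eq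
  rw [polarIsometry, conjTranspose_mul, hN, trace_mul_comm, Matrix.mul_assoc, trace_mul_comm,
    hM.1.mul_cfc, traceNorm, msqrt_eq_cfc hM,
    cfc_congr fun x _ => (div_eq_mul_inv x √x).symm.trans Real.div_sqrt]

theorem re_trace_mul_le_traceNorm {U : Matrix n n ℂ} (hU : (1 - U * Uᴴ).PosSemidef) :
    (M * U).trace.re ≤ traceNorm M := by
  set A := msqrt (Mᴴ * M)
  set S := msqrt A
  set W := polarIsometry M
  have hA : A.PosSemidef := posSemidef_msqrt _
  have hS : Sᴴ = S := (posSemidef_msqrt A).1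
  have hSS : S * S = A := msqrt_mul_self hA
  have hconj (V : Matrix n n ℂ) : (S * V)ᴴ * (S * V) = Vᴴ * A * V := by
    rw [conjTranspose_mul, hS, ← hSS]
    simp only [Matrix.mul_assoc]
  have hW : (1 - Wᴴ * (Wᴴ)ᴴ).PosSemidef := by
    rw [conjTranspose_conjTranspose]
    exact posSemidef_one_sub_conjTranspose_polarIsometry_mul_self M
  have hMU : M * U = (S * Wᴴ)ᴴ * (S * U) := by
    rw [conjTranspose_mul, conjTranspose_conjTranspose, hS, Matrix.mul_assoc, ← Matrix.mul_assoc S,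
      hSS, ← Matrix.mul_assoc, polarIsometry_mul_msqrt]
  calc (M * U).trace.re
      ≤ √((S * Wᴴ)ᴴ * (S * Wᴴ)).trace.re * √((S * U)ᴴ * (S * U)).trace.re := by
        rw [hMU]; exact re_trace_conjTranspose_mul_le _ _
    _ ≤ √A.trace.re * √A.trace.re := by
        rw [hconj, hconj]
        exact mul_le_mul (Real.sqrt_le_sqrt (hA.re_trace_conjTranspose_mul_mul_le hW))
          (Real.sqrt_le_sqrt (hA.re_trace_conjTranspose_mul_mul_le hU)) (Real.sqrt_nonneg _)
          (Real.sqrt_nonneg _)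
    _ = traceNorm M := Real.mul_self_sqrt (traceNorm_nonneg M)

theorem re_trace_le_traceNorm : M.trace.re ≤ traceNorm M := by
  simpa using re_trace_mul_le_traceNorm M (U := 1) (by simpa using PosSemidef.zero)

theorem Matrix.IsHermitian.traceNorm_eq {X : Matrix n n ℂ} (hX : X.IsHermitian) :
    traceNorm X = ∑ i, |hX.eigenvalues i| := by
  have hsq : X * X = cfc (fun x : ℝ => x * x) X := by
    simpa only [cfc_id' ℝ X hX.isSelfAdjoint] using hX.mul_cfc fun x => x
  have habs : msqrt (Xᴴ * X) = cfc (fun x : ℝ => |x|) X := by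
    rw [msqrt_eq_cfc (posSemidef_conjTranspose_mul_self X), hX.eq, hsq,
      ← cfc_comp Real.sqrt (fun x => x * x) X]
    exact cfc_congr fun x _ => Real.sqrt_mul_self_eq_abs x
  rw [traceNorm, habs, hX.trace_cfc, Complex.ofReal_re]

theorem Matrix.IsHermitian.exists_re_trace_mul_eq {X : Matrix n n ℂ} (hX : X.IsHermitian) :
    ∃ E : Matrix n n ℂ, E.PosSemidef ∧ (1 - E).PosSemidef ∧
      (X * E).trace.re = (traceNorm X + X.trace.re) / 2 := by
  refine ⟨cfc (fun x => if 0 ≤ x then 1 else 0) X, posSemidef_cfc fun x _ => ?_, ?_, ?_⟩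
  · split_ifs <;> norm_num
  · rw [one_sub_cfc hX]
    exact posSemidef_cfc fun x _ => by split_ifs <;> norm_num
  · rw [hX.mul_cfc, hX.trace_cfc, Complex.ofReal_re, hX.traceNorm_eq,
      hX.trace_eq_sum_eigenvalues, Complex.re_sum]
    simp only [RCLike.ofReal_eq_complex_ofReal, Complex.ofReal_re]
    rw [← Finset.sum_add_distrib, Finset.sum_div]
    refine Finset.sum_congr rfl fun i _ => ?_
    split_ifs with h
    · rw [abs_of_nonneg h]; ring
    · rw [abs_of_neg (not_le.mp h)]; ring

theorem re_trace_sub_mul_sub_le_re_trace_add_mul_abs {A B : Matrix n n ℂ} (hA : A.PosSemidef)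
    (hB : B.PosSemidef) :
    ((A - B) * (A - B)).trace.re ≤ ((A + B) * cfc (fun x : ℝ => |x|) (A - B)).trace.re := by
  set C := A - B with hCdef
  set D := cfc (fun x : ℝ => |x|) C
  have hDC : (D - C).PosSemidef := by
    rw [show D - C = cfc (fun x => |x| - x) C by
      rw [cfc_sub (fun x : ℝ => |x|) (fun x => x) C, cfc_id' ℝ C]]
    exact posSemidef_cfc fun x _ => sub_nonneg.mpr (le_abs_self x)
  have hDC' : (D + C).PosSemidef := by
    rw [show D + C = cfc (fun x => |x| + x) C by
      rw [cfc_add (a := C) (fun x : ℝ => |x|) (fun x => x), cfc_id' ℝ C]]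
    exact posSemidef_cfc fun x _ => by linarith [neg_abs_le x]
  have h : (A + B) * D - C * C = A * (D - C) + B * (D + C) := by
    rw [hCdef]; noncomm_ring
  have := congrArg (fun Z => Z.trace.re) h
  simp only [trace_sub, trace_add, Complex.sub_re, Complex.add_re] at this
  linarith [hA.re_trace_mul_nonneg hDC, hB.re_trace_mul_nonneg hDC']

/-- The Powers–Størmer inequality. -/
theorem re_trace_sub_mul_sub_le_traceNorm {A B : Matrix n n ℂ} (hA : A.PosSemidef)
    (hB : B.PosSemidef) : ((A - B) * (A - B)).trace.re ≤ traceNorm (A * A - B * B) := by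
  have hC : (A - B).IsHermitian := hA.1.sub hB.1
  set C := A - B with hCdef
  set U := cfc (fun x => if 0 ≤ x then (1 : ℝ) else -1) C
  set D := cfc (fun x : ℝ => |x|) C
  have hCU : C * U = D := by
    rw [hC.mul_cfc]
    refine cfc_congr fun x _ => ?_
    split_ifs with h
    · rw [abs_of_nonneg h, mul_one]
    · rw [abs_of_neg (not_le.mp h), mul_neg_one]
  have hUC : U * C = D := by
    have h := congrArg conjTranspose hCU
    rwa [conjTranspose_mul, hC.eq, (isHermitian_cfc C _).eq, (isHermitian_cfc C _).eq] at h
  have hU : (1 - U * Uᴴ).PosSemidef := by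
    rw [(isHermitian_cfc C _).eq, cfc_mul_cfc,
      cfc_congr (g := fun _ => 1) fun x _ => by split_ifs <;> norm_num,
      cfc_const_one ℝ C hC.isSelfAdjoint, sub_self]
    exact .zero
  have hsym : (A * A - B * B) * U + (A * A - B * B) * U =
      C * ((A + B) * U) + (A + B) * (C * U) := by
    rw [hCdef]; noncomm_ring
  have htr : ((A * A - B * B) * U).trace.re = ((A + B) * D).trace.re := by
    have := congrArg (fun Z => Z.trace.re) hsym
    simp only [trace_add, Complex.add_re] at this
    rw [trace_mul_comm C, Matrix.mul_assoc, hUC, hCU] at this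
    linarith
  calc (C * C).trace.re ≤ ((A + B) * D).trace.re :=
        re_trace_sub_mul_sub_le_re_trace_add_mul_abs hA hB
    _ = ((A * A - B * B) * U).trace.re := htr.symm
    _ ≤ traceNorm (A * A - B * B) := re_trace_mul_le_traceNorm _ hU

theorem re_trace_msqrt_mul_mul_msqrt_mul_le {ρ σ F U : Matrix n n ℂ} (hρ : ρ.PosSemidef)
    (hσ : σ.PosSemidef) (hF : F.PosSemidef) (hU : (1 - U * Uᴴ).PosSemidef) :
    (msqrt ρ * F * msqrt σ * U).trace.re ≤ √(F * ρ).trace.re * √(F * σ).trace.re := by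
  have hρ' : (msqrt ρ)ᴴ = msqrt ρ := (posSemidef_msqrt ρ).1
  have hσ' : (msqrt σ)ᴴ = msqrt σ := (posSemidef_msqrt σ).1
  have hF' : (msqrt F)ᴴ = msqrt F := (posSemidef_msqrt F).1
  have hFF (Z : Matrix n n ℂ) : msqrt F * (msqrt F * Z) = F * Z := by
    rw [← Matrix.mul_assoc, msqrt_mul_self hF]
  set X := msqrt F * msqrt ρ
  set Y := msqrt F * msqrt σ * U
  have hXY : Xᴴ * Y = msqrt ρ * F * msqrt σ * U := by
    rw [conjTranspose_mul, hρ', hF']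
    simp only [Y, Matrix.mul_assoc, hFF]
  have hXX : (Xᴴ * X).trace = (F * ρ).trace := by
    rw [conjTranspose_mul, hρ', hF', Matrix.mul_assoc, ← Matrix.mul_assoc (msqrt F),
      msqrt_mul_self hF, trace_mul_comm, Matrix.mul_assoc, msqrt_mul_self hρ]
  have hYY : Yᴴ * Y = Uᴴ * (msqrt σ * F * msqrt σ) * U := by
    rw [conjTranspose_mul, conjTranspose_mul, hσ', hF']
    simp only [Y, Matrix.mul_assoc, hFF]
  have hZ : (msqrt σ * F * msqrt σ).PosSemidef := by
    simpa only [hσ'] using hF.conjTranspose_mul_mul_same (msqrt σ)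
  have hZtr : (msqrt σ * F * msqrt σ).trace = (F * σ).trace := by
    rw [trace_mul_comm, ← Matrix.mul_assoc, msqrt_mul_self hσ, trace_mul_comm]
  calc (msqrt ρ * F * msqrt σ * U).trace.re
      ≤ √(Xᴴ * X).trace.re * √(Yᴴ * Y).trace.re := hXY ▸ re_trace_conjTranspose_mul_le X Y
    _ ≤ √(F * ρ).trace.re * √(F * σ).trace.re := by
        rw [hXX, hYY, ← hZtr]
        exact mul_le_mul_of_nonneg_left
          (Real.sqrt_le_sqrt (hZ.re_trace_conjTranspose_mul_mul_le hU)) (Real.sqrt_nonneg _)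

theorem traceNorm_msqrt_mul_msqrt_le_sum {ι : Type*} [Fintype ι] {ρ σ : Matrix n n ℂ}
    (hρ : ρ.PosSemidef) (hσ : σ.PosSemidef) {E : ι → Matrix n n ℂ} (hE : ∀ i, (E i).PosSemidef)
    (hE1 : ∑ i, E i = 1) :
    traceNorm (msqrt ρ * msqrt σ) ≤ ∑ i, √(E i * ρ).trace.re * √(E i * σ).trace.re := by
  set M := msqrt ρ * msqrt σ
  have hW : (1 - (polarIsometry M)ᴴ * (polarIsometry M)ᴴᴴ).PosSemidef := by
    rw [conjTranspose_conjTranspose]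
    exact posSemidef_one_sub_conjTranspose_polarIsometry_mul_self M
  have hsplit : M * (polarIsometry M)ᴴ = ∑ i, msqrt ρ * E i * msqrt σ * (polarIsometry M)ᴴ := by
    rw [← Finset.sum_mul, ← Finset.sum_mul, ← Finset.mul_sum, hE1, Matrix.mul_one]
  rw [← re_trace_mul_conjTranspose_polarIsometry, hsplit, trace_sum, Complex.re_sum]
  exact Finset.sum_le_sum fun i _ => re_trace_msqrt_mul_mul_msqrt_mul_le hρ hσ (hE i) hW

end

theorem sq_sum_sqrt_mul_sqrt_add_sq_le_one {ι : Type*} [Fintype ι] {p q : ι → ℝ}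
    (hp : ∀ i, 0 ≤ p i) (hq : ∀ i, 0 ≤ q i) (hp1 : ∑ i, p i = 1) (hq1 : ∑ i, q i = 1) :
    (∑ i, √(p i) * √(q i)) ^ 2 + ((∑ i, |p i - q i|) / 2) ^ 2 ≤ 1 := by
  set a := fun i => √(p i)
  set b := fun i => √(q i)
  have ha : ∑ i, a i ^ 2 = 1 := by simpa only [a, Real.sq_sqrt (hp _)] using hp1
  have hb : ∑ i, b i ^ 2 = 1 := by simpa only [b, Real.sq_sqrt (hq _)] using hq1
  have habs (i : ι) : |p i - q i| = (a i + b i) * |a i - b i| := by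
    rw [← abs_of_nonneg (add_nonneg (Real.sqrt_nonneg (p i)) (Real.sqrt_nonneg (q i))), ← abs_mul,
      ← sq_sub_sq, Real.sq_sqrt (hp i), Real.sq_sqrt (hq i)]
  have hcs := Finset.sum_mul_sq_le_sq_mul_sq Finset.univ (fun i => a i + b i) (fun i => |a i - b i|)
  simp only [sq_abs, sub_sq, add_sq, Finset.sum_add_distrib, Finset.sum_sub_distrib, ha, hb,
    mul_assoc, ← Finset.mul_sum] at hcs
  simp only [habs]
  nlinarith [hcs]

theorem min_le_sqrt_mul {x y : ℝ} (hx : 0 ≤ x) (hy : 0 ≤ y) : min x y ≤ √(x * y) :=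
  Real.le_sqrt_of_sq_le (by
    rw [sq]; exact mul_le_mul (min_le_left x y) (min_le_right x y) (le_min hx hy) hx)

section
variable {n : Type*} [Fintype n] [DecidableEq n] {ρ σ E : Matrix n n ℂ}

theorem gTDist_nonneg (ρ σ : Matrix n n ℂ) : 0 ≤ gTDist ρ σ := by
  have := traceNorm_nonneg (ρ - σ)
  unfold gTDist
  positivity

def outcomeProbs (E ρ : Matrix n n ℂ) : Fin 3 → ℝ :=
  ![(E * ρ).trace.re, ((1 - E) * ρ).trace.re, 1 - ρ.trace.re]

theorem re_trace_one_sub_mul (E Z : Matrix n n ℂ) :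
    ((1 - E) * Z).trace.re = Z.trace.re - (E * Z).trace.re := by
  rw [Matrix.sub_mul, Matrix.one_mul, trace_sub, Complex.sub_re]

theorem outcomeProbs_nonneg (hE : E.PosSemidef) (h1E : (1 - E).PosSemidef) (hρ : ρ.PosSemidef)
    (hρ1 : ρ.trace.re ≤ 1) (i : Fin 3) : 0 ≤ outcomeProbs E ρ i := by
  fin_cases i
  exacts [hE.re_trace_mul_nonneg hρ, h1E.re_trace_mul_nonneg hρ, sub_nonneg.mpr hρ1]

theorem sum_outcomeProbs (E ρ : Matrix n n ℂ) : ∑ i, outcomeProbs E ρ i = 1 := by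
  simp [outcomeProbs, Fin.sum_univ_three, re_trace_one_sub_mul]

theorem gFid_le_sq_sum_sqrt_outcomeProbs (hρ : ρ.PosSemidef) (hσ : σ.PosSemidef)
    (hE : E.PosSemidef) (h1E : (1 - E).PosSemidef) (hρ1 : ρ.trace.re ≤ 1) :
    gFid ρ σ ≤ (∑ i, √(outcomeProbs E ρ i) * √(outcomeProbs E σ i)) ^ 2 := by
  have h := traceNorm_msqrt_mul_msqrt_le_sum hρ hσ (E := ![E, 1 - E])
    (fun i => by fin_cases i; exacts [hE, h1E]) (by simp)
  have h3 : √((1 - ρ.trace.re) * (1 - σ.trace.re)) =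
      √(outcomeProbs E ρ 2) * √(outcomeProbs E σ 2) :=
    Real.sqrt_mul (outcomeProbs_nonneg hE h1E hρ hρ1 2) _
  refine pow_le_pow_left₀ (add_nonneg (traceNorm_nonneg _) (Real.sqrt_nonneg _)) ?_ 2
  rw [h3, Fin.sum_univ_three]
  simp only [Fin.sum_univ_two, outcomeProbs, Matrix.cons_val_zero, Matrix.cons_val_one] at h ⊢
  linarith

theorem two_mul_gTDist_le_sum_abs_sub_outcomeProbs
    (hE : ((ρ - σ) * E).trace.re = (traceNorm (ρ - σ) + (ρ - σ).trace.re) / 2) :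
    2 * gTDist ρ σ ≤ ∑ i, |outcomeProbs E ρ i - outcomeProbs E σ i| := by
  rw [trace_sub, Complex.sub_re, trace_mul_comm, Matrix.mul_sub, trace_sub, Complex.sub_re] at hE
  simp only [Fin.sum_univ_three, outcomeProbs, Matrix.cons_val_zero, Matrix.cons_val_one,
    Matrix.cons_val_two, Matrix.head_cons, Matrix.tail_cons, re_trace_one_sub_mul]
  have e3 : |1 - ρ.trace.re - (1 - σ.trace.re)| = |ρ.trace.re - σ.trace.re| := by
    rw [abs_sub_comm]; ring_nf
  rw [e3, gTDist]
  linarith [le_abs_self ((E * ρ).trace.re - (E * σ).trace.re),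
    neg_le_abs (ρ.trace.re - (E * ρ).trace.re - (σ.trace.re - (E * σ).trace.re))]

theorem gFid_le_one_sub_gTDist_sq (hρ : ρ.PosSemidef) (hσ : σ.PosSemidef)
    (hρ1 : ρ.trace.re ≤ 1) (hσ1 : σ.trace.re ≤ 1) : gFid ρ σ ≤ 1 - gTDist ρ σ ^ 2 := by
  obtain ⟨E, hE, h1E, hEtr⟩ := (hρ.1.sub hσ.1).exists_re_trace_mul_eq
  have hcl := sq_sum_sqrt_mul_sqrt_add_sq_le_one (outcomeProbs_nonneg hE h1E hρ hρ1)
    (outcomeProbs_nonneg hE h1E hσ hσ1) (sum_outcomeProbs E ρ) (sum_outcomeProbs E σ)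
  have hF := gFid_le_sq_sum_sqrt_outcomeProbs (σ := σ) hρ hσ hE h1E hρ1
  have hT := two_mul_gTDist_le_sum_abs_sub_outcomeProbs hEtr
  have hT0 := gTDist_nonneg ρ σ
  nlinarith

theorem one_sub_gTDist_le (hρ : ρ.PosSemidef) (hσ : σ.PosSemidef)
    (hρ1 : ρ.trace.re ≤ 1) (hσ1 : σ.trace.re ≤ 1) :
    1 - gTDist ρ σ ≤ traceNorm (msqrt ρ * msqrt σ) + √((1 - ρ.trace.re) * (1 - σ.trace.re)) := by
  have hPS := re_trace_sub_mul_sub_le_traceNorm (posSemidef_msqrt ρ) (posSemidef_msqrt σ)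
  rw [msqrt_mul_self hρ, msqrt_mul_self hσ, Matrix.sub_mul, Matrix.mul_sub, Matrix.mul_sub,
    msqrt_mul_self hρ, msqrt_mul_self hσ] at hPS
  simp only [trace_sub, Complex.sub_re, trace_mul_comm (msqrt σ)] at hPS
  have hre := re_trace_le_traceNorm (msqrt ρ * msqrt σ)
  have hmin := min_le_sqrt_mul (sub_nonneg.mpr hρ1) (sub_nonneg.mpr hσ1)
  unfold gTDist
  rcases min_cases (1 - ρ.trace.re) (1 - σ.trace.re) with ⟨h, _⟩ | ⟨h, _⟩ <;>
    rcases abs_cases (ρ.trace.re - σ.trace.re) with ⟨h', _⟩ | ⟨h', _⟩ <;>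
    linarith

end

theorem stmt3 {n : Type*} [Fintype n] [DecidableEq n] (ρ σ : Matrix n n ℂ)
    (hρ : ρ.PosSemidef) (hσ : σ.PosSemidef)
    (hρ1 : ρ.trace.re ≤ 1) (hσ1 : σ.trace.re ≤ 1) :
    gTDist ρ σ ≤ pDist ρ σ ∧
    pDist ρ σ ≤ Real.sqrt (gTDist ρ σ * (2 - gTDist ρ σ)) := by
  have hT := gTDist_nonneg ρ σ
  have hupper := gFid_le_one_sub_gTDist_sq hρ hσ hρ1 hσ1
  have hT1 : gTDist ρ σ ≤ 1 := by nlinarith [show 0 ≤ gFid ρ σ from sq_nonneg _]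
  have hlower : (1 - gTDist ρ σ) ^ 2 ≤ gFid ρ σ :=
    pow_le_pow_left₀ (sub_nonneg.mpr hT1) (one_sub_gTDist_le hρ hσ hρ1 hσ1) 2
  constructor
  · rw [pDist, ← Real.sqrt_sq hT]
    exact Real.sqrt_le_sqrt (by linarith)
  · exact Real.sqrt_le_sqrt (by nlinarith)

end
end
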